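/- Let d be even with d ≥ 2, let P : Matrix (Fin d) (Fin d) ℂ be an orthogonal projector of rank d/2, let 0 ≤ ε ≤ 1/2, let L ≥ 1, and let U, V be unitary d×d matrices. Define the (L+2)-outcome POVMs E_U and E_V by: E_U^k = (1/(2L)) • 1 for k = 1, …, L; E_U^{L+1} = ((1+ε)/4) • 1 − (ε/2) • (U P U†); E_U^{L+2} = ((1−ε)/4) • 1 + (ε/2) • (U P U†); and analogously for E_V with V in place of U. Then E_U and E_V are POVMs, and d_op(E_U, E_V) = (ε/2) · ‖U P U† − V P V†‖, where ‖·‖ is the ℓ²→ℓ² operator (spectral) norm. -/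

import Mathlib

/-!
Write `Q = U P Uᴴ`; it is again a star projection, so `0 ≤ Q ≤ 1`. The last two effects are
`((1 - ε)/4) • 1 + (ε/2) • (1 - Q)` and `((1 - ε)/4) • 1 + (ε/2) • Q`, hence positive for
`0 ≤ ε ≤ 1`. `E_U - E_V` vanishes except at these two outcomes, where it is `∓ (ε/2) • (Q_U - Q_V)`,
so every subset sum is `0` or `± (ε/2) • (Q_U - Q_V)`, and the outcome `L + 2` alone attains the
maximum.
-/

open scoped Matrix ComplexOrder

noncomputable def specNorm {ι : Type*} [Fintype ι] [DecidableEq ι] (A : Matrix ι ι ℂ) : ℝ :=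
  ‖Matrix.toEuclideanCLM (𝕜 := ℂ) A‖

def IsPOVM {ι : Type*} {L : ℕ} [Fintype ι] [DecidableEq ι]
    (E : Fin L → Matrix ι ι ℂ) : Prop :=
  (∀ j, (E j).PosSemidef) ∧ (∑ j, E j) = 1

noncomputable def dOp {ι : Type*} {L : ℕ} [Fintype ι] [DecidableEq ι]
    (A B : Fin L → Matrix ι ι ℂ) : ℝ :=
  ⨆ x : Finset (Fin L), specNorm (∑ j ∈ x, (A j - B j))

/-- The `(L+2)`-outcome POVM used in the packing construction for the
operational-distance lower bound. -/
noncomputable def povmOp (d L : ℕ) (ε : ℝ) (P U : Matrix (Fin d) (Fin d) ℂ) :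
    Fin (L + 2) → Matrix (Fin d) (Fin d) ℂ := fun k =>
  if (k : ℕ) < L then (1 / (2 * (L : ℂ))) • (1 : Matrix (Fin d) (Fin d) ℂ)
  else if (k : ℕ) = L then
    (((1 + ε : ℝ) : ℂ) / 4) • (1 : Matrix (Fin d) (Fin d) ℂ) -
      (((ε : ℝ) : ℂ) / 2) • (U * P * Uᴴ)
  else
    (((1 - ε : ℝ) : ℂ) / 4) • (1 : Matrix (Fin d) (Fin d) ℂ) +
      (((ε : ℝ) : ℂ) / 2) • (U * P * Uᴴ)

open scoped MatrixOrder

section specNorm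

variable {ι : Type*} [Fintype ι] [DecidableEq ι]

lemma specNorm_neg (A : Matrix ι ι ℂ) : specNorm (-A) = specNorm A := by
  rw [specNorm, map_neg, norm_neg, specNorm]

lemma specNorm_smul (c : ℂ) (A : Matrix ι ι ℂ) : specNorm (c • A) = ‖c‖ * specNorm A := by
  rw [specNorm, map_smul, norm_smul, specNorm]

end specNorm

lemma dOp_eq_specNorm_of_sub_eq {ι : Type*} [Fintype ι] [DecidableEq ι] {L : ℕ}
    {A B : Fin L → Matrix ι ι ℂ} {a b : Fin L} (hab : a ≠ b) (M : Matrix ι ι ℂ)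
    (h : A - B = Pi.single b M - Pi.single a M) :
    dOp A B = specNorm M := by
  have hsum (x : Finset (Fin L)) :
      ∑ j ∈ x, (A j - B j) = (if b ∈ x then M else 0) - (if a ∈ x then M else 0) := by
    rw [show ∑ j ∈ x, (A j - B j) = ∑ j ∈ x, (A - B) j from rfl, h]
    simp only [Pi.sub_apply, Finset.sum_sub_distrib, Finset.sum_pi_single']
  refine le_antisymm (ciSup_le fun x => ?_) ?_
  · rw [hsum]
    split_ifs <;> simp [specNorm]
  · calc specNorm M = specNorm (∑ j ∈ {b}, (A j - B j)) := by simp [hsum, hab]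
      _ ≤ dOp A B := le_ciSup (f := fun x => specNorm (∑ j ∈ x, (A j - B j)))
        (Set.finite_range _).bddAbove _

lemma IsStarProjection.conjugate_of_mem_unitary {R : Type*} [Ring R] [StarRing R] {p u : R}
    (hp : IsStarProjection p) (hu : u ∈ unitary R) : IsStarProjection (u * p * star u) :=
  hp.map (Unitary.conjStarAlgAut ℤ R ⟨u, hu⟩)

section povmOp

variable {d L : ℕ} {ε : ℝ} {P U : Matrix (Fin d) (Fin d) ℂ}

@[simp]
lemma povmOp_castSucc_castSucc (i : Fin L) :
    povmOp d L ε P U i.castSucc.castSucc = (1 / (2 * (L : ℂ))) • 1 :=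
  if_pos i.isLt

@[simp]
lemma povmOp_castSucc_last :
    povmOp d L ε P U (Fin.last L).castSucc =
      (((1 + ε : ℝ) : ℂ) / 4) • 1 - (((ε : ℝ) : ℂ) / 2) • (U * P * Uᴴ) := by
  simp [povmOp]

@[simp]
lemma povmOp_last :
    povmOp d L ε P U (Fin.last (L + 1)) =
      (((1 - ε : ℝ) : ℂ) / 4) • 1 + (((ε : ℝ) : ℂ) / 2) • (U * P * Uᴴ) := by
  simp [povmOp]

lemma sum_povmOp (hL : L ≠ 0) : ∑ j, povmOp d L ε P U j = 1 := by
  have hL' : (L : ℂ) * (1 / (2 * L)) = 1 / 2 := by field_simp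
  simp only [Fin.sum_univ_castSucc, povmOp_castSucc_castSucc, povmOp_castSucc_last, povmOp_last,
    Finset.sum_const, Finset.card_univ, Fintype.card_fin, ← Nat.cast_smul_eq_nsmul ℂ, smul_smul,
    hL']
  push_cast
  module

lemma povmOp_posSemidef (hε0 : 0 ≤ ε) (hε1 : ε ≤ 1) (hQ : IsStarProjection (U * P * Uᴴ))
    (j : Fin (L + 2)) : (povmOp d L ε P U j).PosSemidef := by
  have h1 : (0 : ℂ) ≤ ((1 - ε : ℝ) : ℂ) / 4 := by
    have : (0 : ℂ) ≤ ((1 - ε : ℝ) : ℂ) := Complex.zero_le_real.2 (by linarith)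
    positivity
  have h2 : (0 : ℂ) ≤ ((ε : ℝ) : ℂ) / 2 := by
    have : (0 : ℂ) ≤ ((ε : ℝ) : ℂ) := Complex.zero_le_real.2 hε0
    positivity
  induction j using Fin.lastCases with
  | last =>
    rw [povmOp_last]
    exact (Matrix.PosSemidef.one.smul h1).add
      ((Matrix.nonneg_iff_posSemidef.mp hQ.nonneg).smul h2)
  | cast j =>
    induction j using Fin.lastCases with
    | last =>
      have : povmOp d L ε P U (Fin.last L).castSucc =
          (((1 - ε : ℝ) : ℂ) / 4) • 1 + (((ε : ℝ) : ℂ) / 2) • (1 - U * P * Uᴴ) := by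
        rw [povmOp_castSucc_last]; push_cast; module
      rw [this]
      exact (Matrix.PosSemidef.one.smul h1).add
        ((Matrix.nonneg_iff_posSemidef.mp hQ.one_sub_nonneg).smul h2)
    | cast i =>
      rw [povmOp_castSucc_castSucc]
      exact Matrix.PosSemidef.one.smul (by positivity)

lemma povmOp_isPOVM (hL : L ≠ 0) (hε0 : 0 ≤ ε) (hε1 : ε ≤ 1)
    (hQ : IsStarProjection (U * P * Uᴴ)) : IsPOVM (povmOp d L ε P U) :=
  ⟨povmOp_posSemidef hε0 hε1 hQ, sum_povmOp hL⟩

lemma povmOp_sub_povmOp {V : Matrix (Fin d) (Fin d) ℂ} :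
    povmOp d L ε P U - povmOp d L ε P V =
      Pi.single (Fin.last (L + 1)) ((((ε : ℝ) : ℂ) / 2) • (U * P * Uᴴ - V * P * Vᴴ)) -
        Pi.single (Fin.last L).castSucc ((((ε : ℝ) : ℂ) / 2) • (U * P * Uᴴ - V * P * Vᴴ)) := by
  ext1 j
  induction j using Fin.lastCases with
  | last => simp [smul_sub, (Fin.castSucc_lt_last _).ne']
  | cast j =>
    induction j using Fin.lastCases with
    | last =>
      simp only [Pi.sub_apply, povmOp_castSucc_last, Pi.single_eq_same,
        Pi.single_eq_of_ne (Fin.castSucc_lt_last _).ne]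
      module
    | cast i => simp [(Fin.castSucc_lt_last _).ne]

lemma dOp_povmOp (hε0 : 0 ≤ ε) {V : Matrix (Fin d) (Fin d) ℂ} :
    dOp (povmOp d L ε P U) (povmOp d L ε P V) = (ε / 2) * specNorm (U * P * Uᴴ - V * P * Vᴴ) := by
  rw [dOp_eq_specNorm_of_sub_eq (Fin.castSucc_lt_last _).ne _ povmOp_sub_povmOp, specNorm_smul,
    ← Complex.ofReal_ofNat, ← Complex.ofReal_div, Complex.norm_real,
    Real.norm_of_nonneg (by positivity)]

end povmOp

theorem povmOp_isPOVM_and_dop_general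
    {d L : ℕ} (hL : 1 ≤ L)
    (ε : ℝ) (hε0 : 0 ≤ ε) (hε : ε ≤ 1 / 2)
    (P : Matrix (Fin d) (Fin d) ℂ)
    (hP1 : Pᴴ = P) (hP2 : P * P = P)
    (U V : Matrix (Fin d) (Fin d) ℂ)
    (hU : U ∈ Matrix.unitaryGroup (Fin d) ℂ) (hV : V ∈ Matrix.unitaryGroup (Fin d) ℂ) :
    IsPOVM (povmOp d L ε P U) ∧ IsPOVM (povmOp d L ε P V) ∧
      dOp (povmOp d L ε P U) (povmOp d L ε P V) =
        (ε / 2) * specNorm (U * P * Uᴴ - V * P * Vᴴ) := by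
  have hP : IsStarProjection P := ⟨hP2, hP1⟩
  have hL0 : L ≠ 0 := by omega
  have hε1 : ε ≤ 1 := by linarith
  exact ⟨povmOp_isPOVM hL0 hε0 hε1 (hP.conjugate_of_mem_unitary hU),
    povmOp_isPOVM hL0 hε0 hε1 (hP.conjugate_of_mem_unitary hV), dOp_povmOp hε0⟩

/-- The packing POVMs are genuine POVMs, and their operational distance is
exactly `(ε/2)·‖U P U† − V P V†‖`. -/
theorem povmOp_isPOVM_and_dop
    {d L : ℕ} (hd : 2 ≤ d) (hdeven : 2 ∣ d) (hL : 1 ≤ L)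
    (ε : ℝ) (hε0 : 0 ≤ ε) (hε : ε ≤ 1 / 2)
    (P : Matrix (Fin d) (Fin d) ℂ)
    (hP1 : Pᴴ = P) (hP2 : P * P = P) (hPr : (P.trace).re = (d : ℝ) / 2)
    (U V : Matrix (Fin d) (Fin d) ℂ)
    (hU : U ∈ Matrix.unitaryGroup (Fin d) ℂ) (hV : V ∈ Matrix.unitaryGroup (Fin d) ℂ) :
    IsPOVM (povmOp d L ε P U) ∧ IsPOVM (povmOp d L ε P V) ∧
      dOp (povmOp d L ε P U) (povmOp d L ε P V) =
        (ε / 2) * specNorm (U * P * Uᴴ - V * P * Vᴴ) :=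
  povmOp_isPOVM_and_dop_general hL ε hε0 hε P hP1 hP2 U V hU hV
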